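/- Define, for γ ∈ (0,1] and a positive integer k, m̃₊ = ((k+1)/2)[(1+1/γ)k + 1 − 1/γ] and m̃₋ = ((k−1)/2)[(1+1/γ)k + 1 − 1/γ] if k is odd, and m̃₊ = k[(1+1/γ)(k/2) − 1/γ] and m̃₋ = k[(1+1/γ)(k/2) + 1] if k is even. Then 2(m̃₊ + m̃₋/γ) = (m̃₊ − m̃₋)². -/
import Mathlib

theorem stmt_12 (γ : ℝ) (hγ0 : 0 < γ) (hγ1 : γ ≤ 1) (k : ℕ) (hk : 1 ≤ k) (mp mm : ℝ)
    (hmp : mp = if Odd k then ((k : ℝ) + 1) / 2 * ((1 + 1/γ) * k + 1 - 1/γ)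
                else (k : ℝ) * ((1 + 1/γ) * ((k : ℝ) / 2) - 1/γ))
    (hmm : mm = if Odd k then ((k : ℝ) - 1) / 2 * ((1 + 1/γ) * k + 1 - 1/γ)
                else (k : ℝ) * ((1 + 1/γ) * ((k : ℝ) / 2) + 1)) :
    2 * (mp + mm / γ) = (mp - mm) ^ 2 := by
  have hγ : γ ≠ 0 := ne_of_gt hγ0
  subst hmp hmm
  by_cases h : Odd k <;> simp [h] <;> field_simp <;> ring
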